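/- Suppose $a_1, a_2 > 0$ and $b_1 + b_2 > a_1 + a_2$ with $b_1 - a_1 > 0$ and $b_2 - a_1 > 0$. Then for every integer $k \geq 0$: $\frac{\Gamma(b_1)\Gamma(b_2)}{\Gamma(a_1)\Gamma(a_2)\Gamma(b_1+b_2-a_1-a_2)} \int_0^1 t^{a_2+k-1}(1-t)^{b_1+b_2-a_1-a_2-1}\, {}_2F_1(b_1-a_1, b_2-a_1; b_1+b_2-a_1-a_2; 1-t)\, dt = \frac{(a_1)_k (a_2)_k}{(b_1)_k (b_2)_k}$. -/

import Mathlib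

/-!
Expanding `₂F₁(p, q; y; 1 - t)` in powers of `1 - t`, the `n`-th term integrates against
`t ^ (x - 1) * (1 - t) ^ (y - 1)` to a Beta integral `B(x, y + n)`, and the resulting series is
`₂F₁(p, q; x + y; 1)`, which Gauss's theorem sums to `Γ(x+y) Γ(x+y-p-q) / (Γ(x+y-p) Γ(x+y-q))`.
Gauss's theorem is proved the same way: expand `s ^ (-p) = (1 - (1 - s)) ^ (-p)` by the binomial
series and integrate termwise against `s ^ (r - q - 1) * (1 - s) ^ (q - 1)`. All terms are
nonnegative, so both termwise integrations are justified by monotone convergence.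
-/

open Real

/-- Pochhammer symbol `(a)_n` for real `a`. -/
noncomputable def poch (a : ℝ) (n : ℕ) : ℝ := Polynomial.eval a (ascPochhammer ℝ n)

/-- Gauss hypergeometric series `₂F₁(p,q;r;x)` for real parameters/argument. -/
noncomputable def Gauss2F1 (p q r x : ℝ) : ℝ :=
  ∑' n : ℕ, poch p n * poch q n / (poch r n * n.factorial) * x ^ n

open MeasureTheory Set

theorem poch_succ (a : ℝ) (n : ℕ) : poch a (n + 1) = poch a n * (a + n) := by
  simp [poch, ascPochhammer_succ_right]

theorem poch_pos {a : ℝ} (ha : 0 < a) (n : ℕ) : 0 < poch a n := ascPochhammer_pos n a ha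

theorem Gamma_add_nat {a : ℝ} (ha : 0 < a) (n : ℕ) : Gamma (a + n) = poch a n * Gamma a := by
  induction n with
  | zero => simp [poch]
  | succ n ih =>
    rw [Nat.cast_succ, ← add_assoc, Gamma_add_one (by positivity), ih, poch_succ]
    ring

noncomputable def gaussCoeff (p q r : ℝ) (n : ℕ) : ℝ :=
  poch p n * poch q n / (poch r n * n.factorial)

theorem Gauss2F1_eq_tsum (p q r x : ℝ) :
    Gauss2F1 p q r x = ∑' n, gaussCoeff p q r n * x ^ n := rfl

theorem gaussCoeff_pos {p q r : ℝ} (hp : 0 < p) (hq : 0 < q) (hr : 0 < r) (n : ℕ) :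
    0 < gaussCoeff p q r n := by
  have := poch_pos hp n; have := poch_pos hq n; have := poch_pos hr n
  unfold gaussCoeff; positivity

theorem gaussCoeff_mul_poch_div {p q r : ℝ} (hr : 0 < r) (s : ℝ) (n : ℕ) :
    gaussCoeff p q r n * (poch r n / poch s n) = gaussCoeff p q s n := by
  have := (poch_pos hr n).ne'
  unfold gaussCoeff
  field_simp

theorem choose_add_nat_sub_one_eq_poch_div (a : ℝ) (n : ℕ) :
    Ring.choose (a + n - 1) n = poch a n / n.factorial := by
  rw [Ring.choose_eq_smul, Polynomial.descPochhammer_smeval_eq_ascPochhammer,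
    Polynomial.ascPochhammer_smeval_eq_eval, smul_eq_mul, poch]
  ring_nf

theorem hasSum_poch_div_factorial_mul_pow (a : ℝ) {x : ℝ} (hx : |x| < 1) :
    HasSum (fun n => poch a n / n.factorial * x ^ n) ((1 - x) ^ (-a)) := by
  have := (Real.one_div_one_sub_rpow_hasFPowerSeriesOnBall_zero a).hasSum (y := x)
    (by simpa [Metric.eball, edist_dist] using hx)
  simpa [FormalMultilinearSeries.ofScalars_apply_eq, choose_add_nat_sub_one_eq_poch_div, mul_comm,
    Real.rpow_neg (by linarith [abs_lt.1 hx] : (0:ℝ) ≤ 1 - x)] using this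

theorem ofReal_rpow_mul_one_sub_rpow {t : ℝ} (ht : t ∈ Icc (0:ℝ) 1) (x y : ℝ) :
    ((t ^ (x - 1) * (1 - t) ^ (y - 1) : ℝ) : ℂ)
      = (t : ℂ) ^ ((x : ℂ) - 1) * (1 - (t : ℂ)) ^ ((y : ℂ) - 1) := by
  push_cast
  rw [Complex.ofReal_cpow ht.1, Complex.ofReal_cpow (sub_nonneg.2 ht.2)]
  push_cast; rfl

theorem integrableOn_rpow_mul_one_sub_rpow {x y : ℝ} (hx : 0 < x) (hy : 0 < y) :
    IntegrableOn (fun t : ℝ => t ^ (x - 1) * (1 - t) ^ (y - 1)) (Ioo 0 1) := by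
  have h : IntegrableOn (fun t : ℝ => ((t : ℂ) ^ ((x : ℂ) - 1) * (1 - (t : ℂ)) ^ ((y : ℂ) - 1)).re)
      (Ioc 0 1) := (Complex.betaIntegral_convergent (u := x) (v := y) (by simpa) (by simpa)).1.re
  refine (h.mono_set Ioo_subset_Ioc_self).congr_fun (fun t ht => ?_) measurableSet_Ioo
  simp [← ofReal_rpow_mul_one_sub_rpow (Ioo_subset_Icc_self ht)]

theorem integral_rpow_mul_one_sub_rpow {x y : ℝ} (hx : 0 < x) (hy : 0 < y) :
    ∫ t in Ioo (0:ℝ) 1, t ^ (x - 1) * (1 - t) ^ (y - 1)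
      = Gamma x * Gamma y / Gamma (x + y) := by
  have h := Complex.betaIntegral_eq_Gamma_mul_div x y (by simpa) (by simpa)
  rw [Complex.betaIntegral, intervalIntegral.integral_of_le zero_le_one,
    integral_Ioc_eq_integral_Ioo,
    setIntegral_congr_fun measurableSet_Ioo
      (fun t ht => (ofReal_rpow_mul_one_sub_rpow (Ioo_subset_Icc_self ht) x y).symm),
    integral_complex_ofReal, ← Complex.ofReal_add] at h
  simp only [Complex.Gamma_ofReal] at h
  exact_mod_cast h

theorem rpow_mul_one_sub_rpow_nonneg {t : ℝ} (ht : t ∈ Ioo (0:ℝ) 1) (x y : ℝ) :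
    0 ≤ t ^ x * (1 - t) ^ y :=
  mul_nonneg (rpow_nonneg ht.1.le x) (rpow_nonneg (sub_nonneg.2 ht.2.le) y)

theorem one_sub_rpow_add_nat {t : ℝ} (ht : t < 1) (y : ℝ) (n : ℕ) :
    (1 - t) ^ (y + n - 1) = (1 - t) ^ (y - 1) * (1 - t) ^ n := by
  rw [add_sub_right_comm, rpow_add (sub_pos.2 ht), rpow_natCast]

theorem integral_rpow_mul_one_sub_rpow_add_nat {x y : ℝ} (hx : 0 < x) (hy : 0 < y) (n : ℕ) :
    ∫ t in Ioo (0:ℝ) 1, t ^ (x - 1) * (1 - t) ^ (y + n - 1)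
      = Gamma x * Gamma y / Gamma (x + y) * (poch y n / poch (x + y) n) := by
  have := (poch_pos (add_pos hx hy) n).ne'
  have := (Gamma_pos_of_pos (add_pos hx hy)).ne'
  rw [integral_rpow_mul_one_sub_rpow hx (by positivity), ← add_assoc, Gamma_add_nat hy,
    Gamma_add_nat (add_pos hx hy)]
  field_simp

theorem hasSum_integral_of_nonneg {α : Type*} [MeasurableSpace α] {μ : Measure α}
    {f : ℕ → α → ℝ} {F : α → ℝ} (hf : ∀ n, Integrable (f n) μ) (hF : Integrable F μ)
    (hf0 : ∀ n, 0 ≤ᵐ[μ] f n) (hfF : ∀ᵐ a ∂μ, HasSum (fun n => f n a) (F a)) :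
    HasSum (fun n => ∫ a, f n a ∂μ) (∫ a, F a ∂μ) := by
  rw [hasSum_iff_tendsto_nat_of_nonneg (fun n => integral_nonneg_of_ae (hf0 n))]
  have hmono : ∀ᵐ a ∂μ, Monotone fun n => ∑ i ∈ Finset.range n, f i a := by
    filter_upwards [ae_all_iff.2 hf0] with a ha
    exact monotone_nat_of_le_succ fun n => by simpa [Finset.sum_range_succ] using ha n
  simpa [integral_finsetSum _ fun i _ => hf i] using
    integral_tendsto_of_tendsto_of_monotone (fun n => integrable_finsetSum _ fun i _ => hf i)
      hF hmono (hfF.mono fun a ha => ha.tendsto_sum_nat)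

theorem hasSum_gaussCoeff {p q r : ℝ} (hp : 0 < p) (hq : 0 < q) (hpqr : 0 < r - p - q) :
    HasSum (gaussCoeff p q r)
      (Gamma r * Gamma (r - p - q) / (Gamma (r - p) * Gamma (r - q))) := by
  have hrq : 0 < r - q := by linarith
  have hr : 0 < r := by linarith
  have hC : 0 < Gamma (r - q) * Gamma q / Gamma r := by
    have := Gamma_pos_of_pos hrq; have := Gamma_pos_of_pos hq; have := Gamma_pos_of_pos hr
    positivity
  rw [← hasSum_mul_right_iff hC.ne']
  have key := hasSum_integral_of_nonneg (μ := volume.restrict (Ioo 0 1))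
    (f := fun n s => poch p n / n.factorial * (s ^ (r - q - 1) * (1 - s) ^ (q + n - 1)))
    (F := fun s => s ^ (r - p - q - 1) * (1 - s) ^ (q - 1))
    (fun n => (integrableOn_rpow_mul_one_sub_rpow hrq (by positivity)).const_mul _)
    (integrableOn_rpow_mul_one_sub_rpow hpqr hq)
    (fun n => ae_restrict_of_forall_mem measurableSet_Ioo fun s hs =>
      mul_nonneg (div_nonneg (poch_pos hp n).le (Nat.cast_nonneg _))
        (rpow_mul_one_sub_rpow_nonneg hs _ _))
    (ae_restrict_of_forall_mem measurableSet_Ioo fun s hs => by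
      have hs1 : |1 - s| < 1 := by rw [abs_lt]; constructor <;> linarith [hs.1, hs.2]
      have := (hasSum_poch_div_factorial_mul_pow p hs1).mul_right
        (s ^ (r - q - 1) * (1 - s) ^ (q - 1))
      rw [sub_sub_cancel, ← mul_assoc, ← rpow_add hs.1,
        show -p + (r - q - 1) = r - p - q - 1 by ring] at this
      refine this.congr_fun fun n => ?_
      rw [one_sub_rpow_add_nat hs.2]
      ring)
  have hterm : ∀ n : ℕ, ∫ s in Ioo (0:ℝ) 1,
      poch p n / n.factorial * (s ^ (r - q - 1) * (1 - s) ^ (q + n - 1))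
        = gaussCoeff p q r n * (Gamma (r - q) * Gamma q / Gamma r) := fun n => by
    rw [integral_const_mul, integral_rpow_mul_one_sub_rpow_add_nat hrq hq, sub_add_cancel]
    unfold gaussCoeff
    ring
  have hval : ∫ s in Ioo (0:ℝ) 1, s ^ (r - p - q - 1) * (1 - s) ^ (q - 1)
      = Gamma r * Gamma (r - p - q) / (Gamma (r - p) * Gamma (r - q))
        * (Gamma (r - q) * Gamma q / Gamma r) := by
    rw [integral_rpow_mul_one_sub_rpow hpqr hq, show r - p - q + q = r - p by ring]
    have := (Gamma_pos_of_pos hr).ne'; have := (Gamma_pos_of_pos hrq).ne'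
    field_simp
  simpa only [hterm, hval] using key

theorem integral_rpow_mul_one_sub_rpow_mul_Gauss2F1 {p q x y : ℝ} (hp : 0 < p) (hq : 0 < q)
    (hx : 0 < x) (hy : 0 < y) (hpq : 0 < x + y - p - q) :
    ∫ t in Ioo (0:ℝ) 1, t ^ (x - 1) * (1 - t) ^ (y - 1) * Gauss2F1 p q y (1 - t)
      = Gamma x * Gamma y * Gamma (x + y - p - q) / (Gamma (x + y - p) * Gamma (x + y - q)) := by
  set f : ℕ → ℝ → ℝ := fun n t => gaussCoeff p q y n * (t ^ (x - 1) * (1 - t) ^ (y + n - 1))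
  have hf0 : ∀ n, ∀ t ∈ Ioo (0:ℝ) 1, 0 ≤ f n t := fun n t ht =>
    mul_nonneg (gaussCoeff_pos hp hq hy n).le (rpow_mul_one_sub_rpow_nonneg ht _ _)
  have hfi : ∀ n, IntegrableOn (f n) (Ioo 0 1) := fun n =>
    (integrableOn_rpow_mul_one_sub_rpow hx (by positivity)).const_mul _
  have hsum : HasSum (fun n => ∫ t in Ioo (0:ℝ) 1, f n t) (Gamma x * Gamma y / Gamma (x + y) *
      (Gamma (x + y) * Gamma (x + y - p - q) / (Gamma (x + y - p) * Gamma (x + y - q)))) := by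
    refine ((hasSum_gaussCoeff hp hq hpq).mul_left _).congr_fun fun n => ?_
    rw [integral_const_mul, integral_rpow_mul_one_sub_rpow_add_nat hx hy,
      ← gaussCoeff_mul_poch_div hy (x + y)]
    ring
  have hnorm : Summable fun n => ∫ t in Ioo (0:ℝ) 1, ‖f n t‖ :=
    hsum.summable.congr fun n => setIntegral_congr_fun measurableSet_Ioo fun t ht =>
      (norm_of_nonneg (hf0 n t ht)).symm
  calc ∫ t in Ioo (0:ℝ) 1, t ^ (x - 1) * (1 - t) ^ (y - 1) * Gauss2F1 p q y (1 - t)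
      = ∫ t in Ioo (0:ℝ) 1, ∑' n, f n t :=
        setIntegral_congr_fun measurableSet_Ioo fun t ht => by
          simp only [f, Gauss2F1_eq_tsum, one_sub_rpow_add_nat ht.2, ← tsum_mul_left]
          exact tsum_congr fun n => by ring
    _ = ∑' n, ∫ t in Ioo (0:ℝ) 1, f n t := (integral_tsum_of_summable_integral_norm hfi hnorm).symm
    _ = _ := by
      rw [hsum.tsum_eq]
      have := (Gamma_pos_of_pos (add_pos hx hy)).ne'
      field_simp

/-- Moment identity for the representing density of `₃F₂`. -/
theorem stmt16 (a₁ a₂ b₁ b₂ : ℝ) (ha₁ : 0 < a₁) (ha₂ : 0 < a₂)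
    (hψ : a₁ + a₂ < b₁ + b₂) (h₁ : 0 < b₁ - a₁) (h₂ : 0 < b₂ - a₁) (k : ℕ) :
    Real.Gamma b₁ * Real.Gamma b₂ /
        (Real.Gamma a₁ * Real.Gamma a₂ * Real.Gamma (b₁ + b₂ - a₁ - a₂)) *
      (∫ t in (0:ℝ)..1,
        t ^ (a₂ + k - 1) * (1 - t) ^ (b₁ + b₂ - a₁ - a₂ - 1) *
          Gauss2F1 (b₁ - a₁) (b₂ - a₁) (b₁ + b₂ - a₁ - a₂) (1 - t)) =
      poch a₁ k * poch a₂ k / (poch b₁ k * poch b₂ k) := by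
  have hb₁ : 0 < b₁ := by linarith
  have hb₂ : 0 < b₂ := by linarith
  have hy : 0 < b₁ + b₂ - a₁ - a₂ := by linarith
  rw [intervalIntegral.integral_of_le zero_le_one, integral_Ioc_eq_integral_Ioo,
    integral_rpow_mul_one_sub_rpow_mul_Gauss2F1 h₁ h₂ (by positivity) hy (by linarith),
    show a₂ + k + (b₁ + b₂ - a₁ - a₂) - (b₁ - a₁) - (b₂ - a₁) = a₁ + k by ring,
    show a₂ + k + (b₁ + b₂ - a₁ - a₂) - (b₁ - a₁) = b₂ + k by ring,
    show a₂ + k + (b₁ + b₂ - a₁ - a₂) - (b₂ - a₁) = b₁ + k by ring,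
    Gamma_add_nat ha₁, Gamma_add_nat ha₂, Gamma_add_nat hb₁, Gamma_add_nat hb₂]
  have := (Gamma_pos_of_pos ha₁).ne'; have := (Gamma_pos_of_pos ha₂).ne'
  have := (Gamma_pos_of_pos hb₁).ne'; have := (Gamma_pos_of_pos hb₂).ne'
  have := (Gamma_pos_of_pos hy).ne'
  have := (poch_pos hb₁ k).ne'; have := (poch_pos hb₂ k).ne'
  field_simp
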